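/- arXiv:2409.11780 — 2 statements merged into one kernel-verified Lean document; each statement's English description precedes it below -/
import Mathlib

section
/- The Elitist set comparison ⊲_Eli is transitive on finite sets when the underlying preorder ≤ is a preorder: if Γ ⊲_Eli Γ' and Γ' ⊲_Eli Γ'', then Γ ⊲_Eli Γ''. -/
def Eli {P : Type*} [Preorder P] (Γ Γ' : Finset P) : Prop :=
  Γ ≠ ∅ ∧ (Γ' = ∅ ∨ ∃ X ∈ Γ, ∀ Y ∈ Γ', X < Y)

theorem eli_trans {P : Type*} [Preorder P] (Γ Γ' Γ'' : Finset P)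
    (h1 : Eli Γ Γ') (h2 : Eli Γ' Γ'') : Eli Γ Γ'' := by
  obtain ⟨hΓ, hΓ'_empty | ⟨X, hX, hX_lt⟩⟩ := h1
  · exact absurd hΓ'_empty h2.1
  obtain ⟨-, hΓ''_empty | ⟨X', hX', hX'_lt⟩⟩ := h2
  · exact ⟨hΓ, Or.inl hΓ''_empty⟩
  exact ⟨hΓ, Or.inr ⟨X, hX, fun Y hY => (hX_lt X' hX').trans (hX'_lt Y hY)⟩⟩
end

section
/- The argument preference ordering ≺ induced by the Elitist comparison on last principles is a strict order: it is irreflexive and transitive. -/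
def Prec {Arg P : Type*} [Preorder P] (LastPrin : Arg → Finset P) (A B : Arg) : Prop :=
  Eli (LastPrin B) (LastPrin A)

namespace Eli

variable {P : Type*} [Preorder P]

theorem irrefl (Γ : Finset P) : ¬ Eli Γ Γ := by
  rintro ⟨hne, hemp | ⟨X, hX, hlt⟩⟩
  · exact hne hemp
  · exact lt_irrefl X (hlt X hX)

theorem trans {Γ₁ Γ₂ Γ₃ : Finset P} (h₁₂ : Eli Γ₁ Γ₂) (h₂₃ : Eli Γ₂ Γ₃) : Eli Γ₁ Γ₃ := by
  obtain ⟨hne₁, hemp₂ | ⟨X, hX, hX_lt⟩⟩ := h₁₂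
  · exact absurd hemp₂ h₂₃.1
  refine ⟨hne₁, h₂₃.2.imp_right ?_⟩
  rintro ⟨X', hX', hX'_lt⟩
  exact ⟨X, hX, fun Y hY => (hX_lt X' hX').trans (hX'_lt Y hY)⟩

end Eli

theorem prec_strict_order {Arg P : Type*} [Preorder P] (LastPrin : Arg → Finset P) :
    (∀ A, ¬ Prec LastPrin A A) ∧
    (∀ A B C, Prec LastPrin A B → Prec LastPrin B C → Prec LastPrin A C) :=
  ⟨fun A => Eli.irrefl (LastPrin A), fun _ _ _ hAB hBC => Eli.trans hBC hAB⟩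
end
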